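/- arXiv:1509.05099 — 3 statements merged into one kernel-verified Lean document; each statement's English description precedes it below -/
import Mathlib

section
/- If Y has the asymmetric Laplace density f(y|μ,σ,p) = (p(1-p)/σ) exp{-ρ_p((y-μ)/σ)}, then the random variable W = ρ_p((Y-μ)/σ) follows a standard exponential distribution with rate 1. -/
open Real MeasureTheory

/-- The check (loss) function `ρ_p(u) = u (p - 1{u<0})`. -/
noncomputable def rho (p u : ℝ) : ℝ := u * (p - if u < 0 then 1 else 0)

/-- The asymmetric Laplace density. -/
noncomputable def aldPdf (μ σ p y : ℝ) : ℝ :=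
  p * (1 - p) / σ * Real.exp (-(rho p ((y - μ) / σ)))

/-!
The ALD density is `c · exp (-T y)` with `c = p (1 - p) / σ` and `T y = ρ_p ((y - μ) / σ)`, and
`T` is affine on each of the half-lines `[μ, ∞)` and `(-∞, μ)`, with slopes `p / σ` and
`(p - 1) / σ`. An affine change of variables on each half-line shows that `W = T Y` has density
`(σ / p) · c e^{-w} + (σ / (1 - p)) · c e^{-w} = ((1 - p) + p) e^{-w} = e^{-w}` for `w > 0`.
At `w = 0` only the upper piece contributes, so the densities agree only almost everywhere.
-/

open scoped ENNReal

lemma MeasureTheory.Measure.map_withDensity_comp {α β : Type*} [MeasurableSpace α]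
    [MeasurableSpace β] (μ : Measure α) {e : α → β} (he : Measurable e) {g : β → ℝ≥0∞}
    (hg : Measurable g) :
    (μ.withDensity (g ∘ e)).map e = (μ.map e).withDensity g := by
  ext s hs
  rw [Measure.map_apply he hs, withDensity_apply _ (he hs), withDensity_apply _ hs,
    setLIntegral_map hs hg he]
  rfl

lemma Real.map_volume_mul_sub {a : ℝ} (ha : a ≠ 0) (b : ℝ) :
    volume.map (fun y => a * (y - b)) = ENNReal.ofReal |a⁻¹| • volume := by
  have hcomp : (fun y : ℝ => a * (y - b)) = (fun x => a * x) ∘ (fun y => y - b) := rfl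
  rw [hcomp, ← Measure.map_map (measurable_const_mul a) (measurable_sub_const b),
    (measurePreserving_sub_right volume b).map_eq, Real.map_volume_mul_left ha]

lemma Real.map_withDensity_mul_sub {a : ℝ} (ha : a ≠ 0) (b : ℝ) {g : ℝ → ℝ≥0∞}
    (hg : Measurable g) :
    (volume.withDensity (fun y => g (a * (y - b)))).map (fun y => a * (y - b))
      = volume.withDensity (fun w => ENNReal.ofReal |a⁻¹| * g w) := by
  rw [← Function.comp_def g,
    Measure.map_withDensity_comp _ ((measurable_sub_const b).const_mul a) hg,
    Real.map_volume_mul_sub ha, withDensity_smul_measure, ← withDensity_smul _ hg]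
  rfl

lemma map_restrict_withDensity_comp_of_eqOn_mul_sub {g : ℝ → ℝ≥0∞} {T : ℝ → ℝ} {S I : Set ℝ}
    {a b : ℝ} (ha : a ≠ 0) (hg : Measurable g) (hI : MeasurableSet I)
    (hS : (fun y => a * (y - b)) ⁻¹' I = S) (hT : Set.EqOn T (fun y => a * (y - b)) S) :
    ((volume.withDensity (g ∘ T)).restrict S).map T
      = volume.withDensity (fun w => ENNReal.ofReal |a⁻¹| * I.indicator g w) := by
  subst hS
  have hSm : MeasurableSet ((fun y => a * (y - b)) ⁻¹' I) :=
    ((measurable_sub_const b).const_mul a) hI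
  have hdens : ((fun y => a * (y - b)) ⁻¹' I).indicator (g ∘ T)
      = fun y => I.indicator g (a * (y - b)) := by
    rw [Set.indicator_congr (f := g ∘ T) (g := g ∘ fun y => a * (y - b))
      fun y hy => congrArg g (hT hy)]
    exact funext fun y => Set.indicator_comp_right _
  rw [Measure.map_congr (ae_restrict_of_forall_mem hSm hT), restrict_withDensity hSm,
    ← withDensity_indicator hSm, hdens, Real.map_withDensity_mul_sub ha b (hg.indicator hI)]

lemma rho_of_nonneg {p u : ℝ} (hu : 0 ≤ u) : rho p u = p * u := by
  simp [rho, not_lt.mpr hu, mul_comm]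

lemma rho_of_neg {p u : ℝ} (hu : u < 0) : rho p u = (p - 1) * u := by
  simp [rho, hu, mul_comm]

lemma measurable_rho (p : ℝ) : Measurable (rho p) :=
  measurable_id.mul (measurable_const.sub (measurable_const.ite measurableSet_Iio measurable_const))

section HalfLines

variable {μ σ p : ℝ}

lemma eqOn_rho_div_Ici (hσ : 0 < σ) :
    Set.EqOn (fun y => rho p ((y - μ) / σ)) (fun y => p / σ * (y - μ)) (Set.Ici μ) := by
  intro y hy
  dsimp only
  rw [rho_of_nonneg (div_nonneg (sub_nonneg.mpr hy) hσ.le)]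
  ring

lemma eqOn_rho_div_Iio (hσ : 0 < σ) :
    Set.EqOn (fun y => rho p ((y - μ) / σ)) (fun y => (p - 1) / σ * (y - μ)) (Set.Iio μ) := by
  intro y hy
  dsimp only
  rw [rho_of_neg (div_neg_of_neg_of_pos (sub_neg.mpr hy) hσ)]
  ring

lemma preimage_mul_sub_Ici (hσ : 0 < σ) (hp : 0 < p) :
    (fun y => p / σ * (y - μ)) ⁻¹' Set.Ici 0 = Set.Ici μ := by
  ext y
  simp [mul_nonneg_iff_of_pos_left (div_pos hp hσ)]

lemma preimage_mul_sub_Ioi (hσ : 0 < σ) (hp : p < 1) :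
    (fun y => (p - 1) / σ * (y - μ)) ⁻¹' Set.Ioi 0 = Set.Iio μ := by
  ext y
  have hneg : (1 - p) / σ * (μ - y) = (p - 1) / σ * (y - μ) := by ring
  simp [← hneg, mul_pos_iff_of_pos_left (div_pos (sub_pos.mpr hp) hσ)]

lemma abs_inv_div_mul_mul_one_sub_div (hσ : 0 < σ) (hp : 0 < p) :
    |(p / σ)⁻¹| * (p * (1 - p) / σ) = 1 - p := by
  rw [inv_div, abs_of_pos (div_pos hσ hp)]
  field_simp

lemma abs_inv_sub_one_div_mul_mul_one_sub_div (hσ : 0 < σ) (hp : p < 1) :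
    |((p - 1) / σ)⁻¹| * (p * (1 - p) / σ) = p := by
  rw [inv_div, abs_of_neg (div_neg_of_pos_of_neg hσ (sub_neg.mpr hp))]
  field_simp [(sub_neg.mpr hp).ne]
  ring

end HalfLines

/-- If `Y ~ ALD(μ,σ,p)`, then `W = ρ_p((Y-μ)/σ) ~ Exp(1)`. -/
theorem ald_check_exp (μ σ p : ℝ) (hσ : 0 < σ) (hp : p ∈ Set.Ioo (0:ℝ) 1) :
    (volume.withDensity (fun y => ENNReal.ofReal (aldPdf μ σ p y))).map
      (fun y => rho p ((y - μ) / σ)) =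
    volume.withDensity (fun w => ENNReal.ofReal (if 0 ≤ w then Real.exp (-w) else 0)) := by
  obtain ⟨hp0, hp1⟩ := hp
  set T : ℝ → ℝ := fun y => rho p ((y - μ) / σ)
  set g : ℝ → ℝ≥0∞ := fun w => ENNReal.ofReal (p * (1 - p) / σ * exp (-w)) with hg_def
  have hg : Measurable g := by fun_prop
  have hT : Measurable T := (measurable_rho p).comp ((measurable_sub_const μ).div_const σ)
  change (volume.withDensity (g ∘ T)).map T = _
  have hsplit : (volume.withDensity (g ∘ T)).restrict (Set.Ici μ)
      + (volume.withDensity (g ∘ T)).restrict (Set.Iio μ) = volume.withDensity (g ∘ T) := by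
    rw [← Set.compl_Ici]
    exact Measure.restrict_add_restrict_compl measurableSet_Ici
  rw [← hsplit, Measure.map_add _ _ hT,
    map_restrict_withDensity_comp_of_eqOn_mul_sub (div_pos hp0 hσ).ne' hg measurableSet_Ici
      (preimage_mul_sub_Ici hσ hp0) (eqOn_rho_div_Ici hσ),
    map_restrict_withDensity_comp_of_eqOn_mul_sub
      (div_neg_of_neg_of_pos (sub_neg.mpr hp1) hσ).ne hg measurableSet_Ioi
      (preimage_mul_sub_Ioi hσ hp1) (eqOn_rho_div_Iio hσ)]
  refine (withDensity_add_left (measurable_const.mul (hg.indicator measurableSet_Ici)) _).symm.trans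
    (withDensity_congr_ae ?_)
  filter_upwards [compl_mem_ae_iff.mpr (measure_singleton (0 : ℝ))] with w hw
  rcases lt_or_gt_of_ne (Set.mem_compl_singleton_iff.mp hw) with hw | hw
  · simp [not_le.mpr hw, not_lt.mpr hw.le]
  · rw [Pi.add_apply, Pi.mul_apply, Set.indicator_of_mem (Set.mem_Ici.mpr hw.le),
      Set.indicator_of_mem (Set.mem_Ioi.mpr hw), if_pos hw.le, hg_def,
      ← ENNReal.ofReal_mul (abs_nonneg _), ← ENNReal.ofReal_mul (abs_nonneg _),
      ← ENNReal.ofReal_add (by positivity) (by positivity)]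
    congr 1
    linear_combination exp (-w) *
      (abs_inv_div_mul_mul_one_sub_div hσ hp0 + abs_inv_sub_one_div_mul_mul_one_sub_div hσ hp1)
end

section
/- Let U ~ Exp(σ) (density (1/σ)e^{-u/σ} on u>0) and Z ~ N(0,1) be independent. Then Y = μ + ϑ_p U + τ_p √(σU) Z has the ALD(μ,σ,p) distribution, where ϑ_p = (1-2p)/(p(1-p)) and τ_p² = 2/(p(1-p)). -/
open Real MeasureTheory ProbabilityTheory

/-- The exponential distribution with mean `σ` (density `(1/σ) e^{-u/σ}` on `u > 0`). -/
noncomputable def expMeas (σ : ℝ) : Measure ℝ :=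
  volume.withDensity (fun u => ENNReal.ofReal (if 0 < u then (1 / σ) * Real.exp (-u / σ) else 0))

section AuxiliaryLemmas

open Set
open scoped ENNReal NNReal

lemma lintegral_image_1d {s : Set ℝ} {f f' : ℝ → ℝ} (hs : MeasurableSet s)
    (hf' : ∀ x ∈ s, HasDerivWithinAt f (f' x) s x) (hf : Set.InjOn f s) (g : ℝ → ℝ≥0∞) :
    ∫⁻ x in f '' s, g x = ∫⁻ x in s, ENNReal.ofReal |f' x| * g (f x) := by
  simpa only [ContinuousLinearMap.det_toSpanSingleton] using
    lintegral_image_eq_lintegral_abs_det_fderiv_mul volume hs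
      (fun x hx => (hf' x hx).hasFDerivWithinAt) hf g

lemma phi_image {sa sb : ℝ} (ha : 0 < sa) (hb : 0 < sb) :
    (fun t => sa * t - sb / t) '' Ioi 0 = univ := by
  apply eq_univ_of_forall
  intro s
  have hpos : (0:ℝ) < s^2 + 4*sa*sb := by nlinarith [sq_nonneg s]
  set D := Real.sqrt (s^2 + 4*sa*sb) with hD
  have hD2 : D^2 = s^2 + 4*sa*sb := Real.sq_sqrt hpos.le
  have hDgt : |s| < D := by
    have := Real.sqrt_lt_sqrt (sq_nonneg s) (by nlinarith : s^2 < s^2 + 4*sa*sb)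
    rwa [Real.sqrt_sq_eq_abs] at this
  have hts : 0 < s + D := by
    have := neg_abs_le s
    linarith
  refine ⟨(s + D)/(2*sa), mem_Ioi.mpr (by positivity), ?_⟩
  show sa * ((s + D)/(2*sa)) - sb / ((s + D)/(2*sa)) = s
  have ht : (s + D)/(2*sa) ≠ 0 := ne_of_gt (by positivity)
  field_simp
  nlinarith [hD2]

lemma inv_image {c : ℝ} (hc : 0 < c) : (fun r : ℝ => c / r) '' Ioi 0 = Ioi 0 := by
  apply Subset.antisymm
  · rintro _ ⟨r, hr, rfl⟩
    exact div_pos hc hr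
  · intro y hy
    exact ⟨c / y, div_pos hc hy, by field_simp⟩

lemma lintegral_exp_neg_sq_phi {sa sb : ℝ} (ha : 0 < sa) (hb : 0 < sb) :
    ∫⁻ t in Ioi 0, ENNReal.ofReal (rexp (-(sa * t - sb / t)^2)) =
      ENNReal.ofReal (Real.sqrt π / (2 * sa)) := by
  set φ : ℝ → ℝ := fun t => sa * t - sb / t with hφ
  have hderiv : ∀ t ∈ Ioi (0:ℝ), HasDerivWithinAt φ (sa + sb / t^2) (Ioi 0) t := by
    intro t ht
    have ht0 : (0:ℝ) < t := ht
    have h1 : HasDerivAt (fun t : ℝ => sa * t) sa t := by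
      simpa using (hasDerivAt_id t).const_mul sa
    have h2 : HasDerivAt (fun t : ℝ => sb / t) (sb * (-(t^2)⁻¹)) t := by
      simp only [div_eq_mul_inv]
      exact (hasDerivAt_inv (ne_of_gt ht0)).const_mul sb
    have h3 := h1.sub h2
    have harith : sa - sb * (-(t^2)⁻¹) = sa + sb / t^2 := by
      field_simp
      ring
    rw [harith] at h3
    exact h3.hasDerivWithinAt
  have hinj : InjOn φ (Ioi 0) := by
    apply StrictMonoOn.injOn
    intro x hx y hy hxy
    have hx0 : (0:ℝ) < x := hx
    have hy0 : (0:ℝ) < y := hy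
    have hlt : sb / y < sb / x := div_lt_div_of_pos_left hb hx0 hxy
    simp only [hφ]
    nlinarith
  have key := lintegral_image_1d measurableSet_Ioi hderiv hinj
    (fun x => ENNReal.ofReal (rexp (-x^2)))
  rw [phi_image ha hb, Measure.restrict_univ] at key
  have hL : ∫⁻ x : ℝ, ENNReal.ofReal (rexp (-x^2)) = ENNReal.ofReal (Real.sqrt π) := by
    rw [← ofReal_integral_eq_lintegral_ofReal]
    · congr 1
      have := integral_gaussian 1
      simpa using this
    · simpa using integrable_exp_neg_mul_sq one_pos
    · exact ae_of_all _ fun x => (Real.exp_pos _).le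
  rw [hL] at key
  rw [setLIntegral_congr_fun measurableSet_Ioi (fun t (ht : t ∈ Ioi (0:ℝ)) => by
    have ht0 : (0:ℝ) < t := ht
    show ENNReal.ofReal |sa + sb / t^2| * ENNReal.ofReal (rexp (-(φ t)^2)) =
      ENNReal.ofReal (sa * rexp (-(φ t)^2)) + ENNReal.ofReal (sb/t^2 * rexp (-(φ t)^2))
    rw [abs_of_pos (by positivity), ← ENNReal.ofReal_mul (by positivity), add_mul,
      ENNReal.ofReal_add (by positivity) (by positivity)])] at key
  have hmeasA : Measurable fun t : ℝ => ENNReal.ofReal (sa * rexp (-(φ t)^2)) := by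
    fun_prop
  rw [lintegral_add_left hmeasA] at key
  have hB : ∫⁻ t in Ioi 0, ENNReal.ofReal (sb/t^2 * rexp (-(φ t)^2)) =
      ∫⁻ t in Ioi 0, ENNReal.ofReal (sa * rexp (-(φ t)^2)) := by
    have hc : (0:ℝ) < sb / sa := div_pos hb ha
    have hd : ∀ r ∈ Ioi (0:ℝ), HasDerivWithinAt (fun r : ℝ => (sb/sa)/r)
        ((sb/sa) * (-(r^2)⁻¹)) (Ioi 0) r := by
      intro r hr
      have hr0 : (0:ℝ) < r := hr
      have := (hasDerivAt_inv (ne_of_gt hr0)).const_mul (sb/sa)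
      simp only [div_eq_mul_inv]
      exact this.hasDerivWithinAt
    have hinj2 : InjOn (fun r : ℝ => (sb/sa)/r) (Ioi 0) := by
      intro x hx y hy h
      have hx0 : (0:ℝ) < x := hx
      have hy0 : (0:ℝ) < y := hy
      field_simp at h
      exact h.symm
    have hcov := lintegral_image_1d measurableSet_Ioi hd hinj2
      (fun t => ENNReal.ofReal (sb/t^2 * rexp (-(φ t)^2)))
    rw [inv_image hc] at hcov
    rw [hcov]
    apply setLIntegral_congr_fun measurableSet_Ioi
    intro r hr
    have hr0 : (0:ℝ) < r := hr
    have hsq : (sa * ((sb/sa)/r) - sb/((sb/sa)/r))^2 = (sa*r - sb/r)^2 := by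
      field_simp
      ring
    show ENNReal.ofReal |(sb/sa) * (-(r^2)⁻¹)| * ENNReal.ofReal
        (sb/((sb/sa)/r)^2 * rexp (-(φ ((sb/sa)/r))^2)) = ENNReal.ofReal (sa * rexp (-(φ r)^2))
    simp only [hφ]
    rw [hsq, abs_mul, abs_of_pos hc, abs_neg, abs_inv, abs_of_pos (by positivity : (0:ℝ) < r^2),
      ← ENNReal.ofReal_mul (by positivity)]
    congr 1
    field_simp
  rw [hB] at key
  have hA : ∫⁻ t in Ioi 0, ENNReal.ofReal (sa * rexp (-(φ t)^2)) =
      ENNReal.ofReal sa * ∫⁻ t in Ioi 0, ENNReal.ofReal (rexp (-(φ t)^2)) := by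
    simp_rw [ENNReal.ofReal_mul ha.le]
    exact lintegral_const_mul' _ _ ENNReal.ofReal_ne_top
  rw [hA] at key
  have key2 : ENNReal.ofReal (2*sa) * ∫⁻ t in Ioi 0, ENNReal.ofReal (rexp (-(φ t)^2)) =
      ENNReal.ofReal (Real.sqrt π) := by
    rw [key, show (2:ℝ)*sa = sa + sa by ring, ENNReal.ofReal_add ha.le ha.le, add_mul]
  rw [ENNReal.ofReal_div_of_pos (by positivity : (0:ℝ) < 2*sa)]
  rw [ENNReal.eq_div_iff ((ENNReal.ofReal_pos.mpr (by positivity)).ne') ENNReal.ofReal_ne_top]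
  exact key2

lemma lintegral_exp_mix {a b : ℝ} (ha : 0 < a) (hb : 0 ≤ b) :
    ∫⁻ u in Ioi 0, ENNReal.ofReal (rexp (-(a*u + b/u)) / Real.sqrt u) =
      ENNReal.ofReal (Real.sqrt (π/a) * rexp (-2*Real.sqrt (a*b))) := by
  have hd : ∀ t ∈ Ioi (0:ℝ), HasDerivWithinAt (fun t : ℝ => t^2) (2*t) (Ioi 0) t := by
    intro t ht
    simpa using (hasDerivAt_pow 2 t).hasDerivWithinAt
  have hinj : InjOn (fun t : ℝ => t^2) (Ioi 0) := by
    intro x hx y hy h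
    have hx0 : (0:ℝ) < x := hx
    have hy0 : (0:ℝ) < y := hy
    have h1 : (x - y) * (x + y) = 0 := by
      have : x^2 = y^2 := h
      nlinarith
    rcases mul_eq_zero.mp h1 with h2 | h2
    · linarith
    · linarith
  have himage : (fun t : ℝ => t^2) '' Ioi 0 = Ioi 0 := by
    ext x
    constructor
    · rintro ⟨t, ht, rfl⟩
      have : (0:ℝ) < t := ht
      exact mem_Ioi.mpr (by positivity)
    · intro hx
      exact ⟨Real.sqrt x, mem_Ioi.mpr (Real.sqrt_pos.mpr hx), Real.sq_sqrt (le_of_lt hx)⟩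
  have hcov := lintegral_image_1d measurableSet_Ioi hd hinj
    (fun u => ENNReal.ofReal (rexp (-(a*u + b/u)) / Real.sqrt u))
  rw [himage] at hcov
  rw [hcov]
  have hpt : ∀ t ∈ Ioi (0:ℝ),
      ENNReal.ofReal |2*t| * ENNReal.ofReal (rexp (-(a*t^2 + b/t^2)) / Real.sqrt (t^2)) =
      ENNReal.ofReal (2 * rexp (-(a*t^2 + b/t^2))) := by
    intro t ht
    have ht0 : (0:ℝ) < t := ht
    rw [abs_of_pos (by positivity), Real.sqrt_sq ht0.le,
      ← ENNReal.ofReal_mul (by positivity)]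
    congr 1
    field_simp
  rw [setLIntegral_congr_fun measurableSet_Ioi hpt]
  rcases eq_or_lt_of_le hb with hb0 | hb0
  · subst hb0
    simp only [zero_div, add_zero, mul_zero, Real.sqrt_zero, mul_zero, neg_zero, Real.exp_zero,
      mul_one]
    simp_rw [ENNReal.ofReal_mul (by norm_num : (0:ℝ) ≤ 2)]
    rw [lintegral_const_mul' _ _ ENNReal.ofReal_ne_top]
    have hint : ∫⁻ x in Ioi (0:ℝ), ENNReal.ofReal (rexp (-(a*x^2))) =
        ENNReal.ofReal (Real.sqrt (π/a)/2) := by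
      rw [← ofReal_integral_eq_lintegral_ofReal]
      · congr 1
        simpa [neg_mul] using integral_gaussian_Ioi a
      · have := (integrable_exp_neg_mul_sq ha).restrict (s := Ioi 0)
        simpa [neg_mul] using this
      · exact ae_of_all _ fun x => (Real.exp_pos _).le
    rw [hint, ← ENNReal.ofReal_mul (by norm_num)]
    congr 1
    ring
  · set sa := Real.sqrt a with hsadef
    set sb := Real.sqrt b with hsbdef
    have hsa : 0 < sa := Real.sqrt_pos.mpr ha
    have hsb : 0 < sb := Real.sqrt_pos.mpr hb0
    have h1 : sa^2 = a := Real.sq_sqrt ha.le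
    have h2 : sb^2 = b := Real.sq_sqrt hb
    have hpt2 : ∀ t ∈ Ioi (0:ℝ), ENNReal.ofReal (2 * rexp (-(a*t^2 + b/t^2))) =
        ENNReal.ofReal (2 * rexp (-(2*(sa*sb)))) * ENNReal.ofReal (rexp (-(sa*t - sb/t)^2)) := by
      intro t ht
      have ht0 : (0:ℝ) < t := ht
      rw [← ENNReal.ofReal_mul (by positivity)]
      congr 1
      rw [mul_assoc, ← Real.exp_add]
      congr 1
      rw [← h1, ← h2]
      field_simp
      ring
    rw [setLIntegral_congr_fun measurableSet_Ioi hpt2,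
      lintegral_const_mul' _ _ ENNReal.ofReal_ne_top, lintegral_exp_neg_sq_phi hsa hsb,
      ← ENNReal.ofReal_mul (by positivity)]
    congr 1
    have hab : Real.sqrt (a*b) = sa*sb := Real.sqrt_mul ha.le b
    have hpia : Real.sqrt (π/a) = Real.sqrt π / sa := Real.sqrt_div Real.pi_pos.le a
    rw [hab, hpia]
    field_simp

lemma mixture (μ σ p y : ℝ) (hσ : 0 < σ) (hp0 : 0 < p) (hp1 : p < 1) :
    ∫⁻ u : ℝ, ENNReal.ofReal ((if 0 < u then (1/σ) * rexp (-u/σ) else 0) *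
      gaussianPDFReal (μ + (1-2*p)/(p*(1-p)) * u)
        (⟨(Real.sqrt (2/(p*(1-p))) * Real.sqrt (σ*u))^2, sq_nonneg _⟩ * 1) y) =
    ENNReal.ofReal (aldPdf μ σ p y) := by
  have hq : 0 < p*(1-p) := by nlinarith
  set q := p*(1-p) with hqdef
  set k := Real.sqrt (2/q) * Real.sqrt (2*π*σ) with hkdef
  have hk : 0 < k := by
    apply mul_pos <;> [skip; skip] <;> apply Real.sqrt_pos.mpr <;> positivity
  set A := 1/(4*q*σ) with hAdef
  set B := (y-μ)^2 * q / (4*σ) with hBdef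
  set C := rexp ((1-2*p)*(y-μ)/(2*σ)) / (σ * k) with hCdef
  have hA : 0 < A := by positivity
  have hB : 0 ≤ B := by positivity
  have hC : 0 ≤ C := by positivity
  -- reduce to integral over Ioi 0
  have hind : ∀ u : ℝ, ENNReal.ofReal ((if 0 < u then (1/σ) * rexp (-u/σ) else 0) *
      gaussianPDFReal (μ + (1-2*p)/q * u)
        (⟨(Real.sqrt (2/q) * Real.sqrt (σ*u))^2, sq_nonneg _⟩ * 1) y) =
      (Ioi (0:ℝ)).indicator (fun u => ENNReal.ofReal ((1/σ) * rexp (-u/σ) *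
        gaussianPDFReal (μ + (1-2*p)/q * u)
          (⟨(Real.sqrt (2/q) * Real.sqrt (σ*u))^2, sq_nonneg _⟩ * 1) y)) u := by
    intro u
    by_cases h : 0 < u <;> simp [Set.indicator, h, mem_Ioi]
  simp_rw [hind]
  rw [lintegral_indicator measurableSet_Ioi]
  have hpt : ∀ u ∈ Ioi (0:ℝ), ENNReal.ofReal ((1/σ) * rexp (-u/σ) *
      gaussianPDFReal (μ + (1-2*p)/q * u)
        (⟨(Real.sqrt (2/q) * Real.sqrt (σ*u))^2, sq_nonneg _⟩ * 1) y) =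
      ENNReal.ofReal (C * (rexp (-(A*u + B/u)) / Real.sqrt u)) := by
    intro u hu
    have hu0 : (0:ℝ) < u := hu
    congr 1
    simp only [gaussianPDFReal, NNReal.coe_mul, NNReal.coe_one, NNReal.coe_mk]
    have hcsq : (Real.sqrt (2/q) * Real.sqrt (σ*u))^2 * 1 = (2/q)*(σ*u) := by
      rw [mul_pow, Real.sq_sqrt (by positivity : (0:ℝ) ≤ 2/q),
        Real.sq_sqrt (by positivity : (0:ℝ) ≤ σ*u)]
      ring
    change (1/σ) * rexp (-u/σ) * ((Real.sqrt (2*π*((Real.sqrt (2/q) * Real.sqrt (σ*u))^2 * 1)))⁻¹ *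
      rexp (-(y - (μ + (1-2*p)/q * u))^2 / (2*((Real.sqrt (2/q) * Real.sqrt (σ*u))^2 * 1)))) =
      C * (rexp (-(A*u + B/u)) / Real.sqrt u)
    rw [hcsq]
    have hsqrt : Real.sqrt (2*π*((2/q)*(σ*u))) = k * Real.sqrt u := by
      rw [show 2*π*((2/q)*(σ*u)) = (2/q)*(2*π*σ)*u by ring,
        Real.sqrt_mul (by positivity) u, Real.sqrt_mul (by positivity) (2*π*σ)]
    rw [hsqrt]
    have hsu : 0 < Real.sqrt u := Real.sqrt_pos.mpr hu0
    have hexp : -u/σ + -(y - (μ + (1-2*p)/q * u))^2 / (2*((2/q)*(σ*u))) =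
        (1-2*p)*(y-μ)/(2*σ) + -(A*u + B/u) := by
      rw [hAdef, hBdef, hqdef]
      have h1p : (1:ℝ) - p ≠ 0 := by linarith
      field_simp
      ring
    have lhs_eq : (1/σ) * rexp (-u/σ) * ((k * Real.sqrt u)⁻¹ *
        rexp (-(y - (μ + (1-2*p)/q * u))^2 / (2*((2/q)*(σ*u))))) =
        rexp (-u/σ + -(y - (μ + (1-2*p)/q * u))^2 / (2*((2/q)*(σ*u)))) / (σ * k * Real.sqrt u) := by
      rw [Real.exp_add]
      field_simp
    have rhs_eq : C * (rexp (-(A*u + B/u)) / Real.sqrt u) =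
        rexp ((1-2*p)*(y-μ)/(2*σ) + -(A*u + B/u)) / (σ * k * Real.sqrt u) := by
      rw [Real.exp_add, hCdef]
      field_simp
    rw [lhs_eq, rhs_eq, hexp]
  rw [setLIntegral_congr_fun measurableSet_Ioi hpt]
  simp_rw [ENNReal.ofReal_mul hC]
  rw [lintegral_const_mul' _ _ ENNReal.ofReal_ne_top, lintegral_exp_mix hA hB,
    ← ENNReal.ofReal_mul hC]
  congr 1
  -- final constant computation
  have hAB : Real.sqrt (A*B) = |y - μ|/(4*σ) := by
    rw [show A*B = ((y-μ)/(4*σ))^2 by rw [hAdef, hBdef]; field_simp,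
      Real.sqrt_sq_eq_abs, abs_div, abs_of_pos (by positivity : (0:ℝ) < 4*σ)]
  have hk2 : k^2 = (2/q)*(2*π*σ) := by
    rw [hkdef, mul_pow, Real.sq_sqrt (by positivity : (0:ℝ) ≤ 2/q),
      Real.sq_sqrt (by positivity : (0:ℝ) ≤ 2*π*σ)]
  have hpiA : Real.sqrt (π/A) = q * k := by
    rw [show π/A = (q*k)^2 by rw [mul_pow, hk2, hAdef]; field_simp; ring,
      Real.sqrt_sq (by positivity)]
  rw [hAB, hpiA, aldPdf, rho]
  rcases le_or_gt 0 (y - μ) with hy | hy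
  · rw [abs_of_nonneg hy, if_neg (not_lt.mpr (by positivity : (0:ℝ) ≤ (y-μ)/σ))]
    have hE : rexp ((1-2*p)*(y-μ)/(2*σ)) * rexp (-2*((y-μ)/(4*σ))) =
        rexp (-((y-μ)/σ*(p-0))) := by
      rw [← Real.exp_add]
      congr 1
      field_simp
      ring
    calc C * (q*k*rexp (-2*((y-μ)/(4*σ))))
        = q/σ * (rexp ((1-2*p)*(y-μ)/(2*σ)) * rexp (-2*((y-μ)/(4*σ)))) := by
          rw [hCdef]; field_simp
      _ = p*(1-p)/σ * rexp (-((y-μ)/σ*(p-0))) := by rw [hE, hqdef]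
  · rw [abs_of_neg hy, if_pos (div_neg_of_neg_of_pos hy hσ)]
    have hE : rexp ((1-2*p)*(y-μ)/(2*σ)) * rexp (-2*(-(y-μ)/(4*σ))) =
        rexp (-((y-μ)/σ*(p-1))) := by
      rw [← Real.exp_add]
      congr 1
      field_simp
      ring
    calc C * (q*k*rexp (-2*(-(y-μ)/(4*σ))))
        = q/σ * (rexp ((1-2*p)*(y-μ)/(2*σ)) * rexp (-2*(-(y-μ)/(4*σ)))) := by
          rw [hCdef]; field_simp
      _ = p*(1-p)/σ * rexp (-((y-μ)/σ*(p-1))) := by rw [hE, hqdef]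

end AuxiliaryLemmas

open Set in
open scoped ENNReal NNReal in
/-- Stochastic representation of the ALD: if `U ~ Exp(σ)` and `Z ~ N(0,1)` are independent,
then `Y = μ + ϑ_p U + τ_p √(σU) Z ~ ALD(μ,σ,p)`. -/
theorem ald_stochastic_representation (μ σ p : ℝ) (hσ : 0 < σ) (hp : p ∈ Set.Ioo (0:ℝ) 1) :
    ((expMeas σ).prod (gaussianReal 0 1)).map
      (fun uz : ℝ × ℝ =>
        μ + (1 - 2 * p) / (p * (1 - p)) * uz.1 +
          Real.sqrt (2 / (p * (1 - p))) * Real.sqrt (σ * uz.1) * uz.2) =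
    volume.withDensity (fun y => ENNReal.ofReal (aldPdf μ σ p y)) := by
  obtain ⟨hp0, hp1⟩ := hp
  have hq : 0 < p * (1 - p) := by nlinarith
  set ϑ := (1 - 2 * p) / (p * (1 - p)) with hϑ
  set κ := Real.sqrt (2 / (p * (1 - p))) with hκ
  have hκ0 : 0 < κ := Real.sqrt_pos.mpr (by positivity)
  set dens : ℝ → ℝ := fun u => if 0 < u then (1 / σ) * Real.exp (-u / σ) else 0 with hdens
  have hdens_nonneg : ∀ u, 0 ≤ dens u := by
    intro u
    by_cases h : 0 < u <;> simp [hdens, h] <;> positivity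
  have hdens_meas : Measurable fun u => ENNReal.ofReal (dens u) := by
    apply Measurable.ennreal_ofReal
    exact Measurable.ite measurableSet_Ioi
      (measurable_const.mul (Real.measurable_exp.comp (measurable_id.neg.div_const σ)))
      measurable_const
  have hf : Measurable (fun uz : ℝ × ℝ => μ + ϑ * uz.1 + κ * Real.sqrt (σ * uz.1) * uz.2) := by
    fun_prop
  ext s hs
  rw [Measure.map_apply hf hs, withDensity_apply _ hs]
  have hexp : expMeas σ = volume.withDensity (fun u => ENNReal.ofReal (dens u)) := rfl
  rw [hexp, Measure.prod_apply (hf hs),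
    lintegral_withDensity_eq_lintegral_mul _ hdens_meas (measurable_measure_prodMk_left (hf hs))]
  simp only [Pi.mul_apply]
  have hsection : ∀ u : ℝ, ENNReal.ofReal (dens u) *
      (gaussianReal 0 1) (Prod.mk u ⁻¹'
        ((fun uz : ℝ × ℝ => μ + ϑ * uz.1 + κ * Real.sqrt (σ * uz.1) * uz.2) ⁻¹' s)) =
      ∫⁻ y in s, ENNReal.ofReal (dens u *
        gaussianPDFReal (μ + ϑ * u) (⟨(κ * Real.sqrt (σ * u))^2, sq_nonneg _⟩ * 1) y) := by
    intro u
    by_cases hu : 0 < u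
    · set c := κ * Real.sqrt (σ * u) with hc
      have hc0 : 0 < c := by
        apply mul_pos hκ0
        exact Real.sqrt_pos.mpr (by positivity)
      have hvne : (⟨c^2, sq_nonneg c⟩ * 1 : ℝ≥0) ≠ 0 := by
        change (⟨c^2, sq_nonneg c⟩ : ℝ≥0) * 1 ≠ 0
        rw [mul_one]
        intro h
        exact (pow_ne_zero 2 hc0.ne') (congrArg NNReal.toReal h)
      have hmapmul : (gaussianReal 0 1).map (fun z => c * z) =
          gaussianReal (c * 0) (⟨c^2, sq_nonneg _⟩ * 1) := gaussianReal_map_const_mul c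
      have hmapadd : (gaussianReal (c * 0) (⟨c^2, sq_nonneg _⟩ * 1)).map
          (fun z => (μ + ϑ * u) + z) =
          gaussianReal (c * 0 + (μ + ϑ * u)) (⟨c^2, sq_nonneg _⟩ * 1) :=
        gaussianReal_map_const_add (μ + ϑ * u)
      have hcomp : (gaussianReal 0 1).map (fun z => (μ + ϑ * u) + c * z) =
          gaussianReal (c * 0 + (μ + ϑ * u)) (⟨c^2, sq_nonneg _⟩ * 1) := by
        rw [← hmapadd, ← hmapmul,
          Measure.map_map (measurable_const_add _) (measurable_const_mul _)]
        rfl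
      have hpre : Prod.mk u ⁻¹'
          ((fun uz : ℝ × ℝ => μ + ϑ * uz.1 + κ * Real.sqrt (σ * uz.1) * uz.2) ⁻¹' s) =
          (fun z => (μ + ϑ * u) + c * z) ⁻¹' s := by
        ext z
        simp [mem_preimage, hc, mul_assoc]
      rw [hpre, ← Measure.map_apply (by fun_prop) hs, hcomp,
        gaussianReal_apply _ hvne s, ← lintegral_const_mul' _ _ ENNReal.ofReal_ne_top]
      congr 1
      ext y
      rw [gaussianPDF]
      rw [← ENNReal.ofReal_mul (hdens_nonneg u)]
      congr 2
      rw [mul_zero, zero_add]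
    · have hd0 : dens u = 0 := by simp [hdens, hu]
      simp [hd0]
  rw [lintegral_congr hsection,
    lintegral_lintegral_swap (by
      apply Measurable.aemeasurable
      apply Measurable.ennreal_ofReal
      apply Measurable.mul
      · exact (Measurable.ite measurableSet_Ioi
          (measurable_const.mul (Real.measurable_exp.comp (measurable_id.neg.div_const σ)))
          measurable_const).comp measurable_fst
      · simp only [gaussianPDFReal, NNReal.coe_mul, NNReal.coe_mk, NNReal.coe_one]
        fun_prop)]
  apply setLIntegral_congr_fun hs
  intro y _
  exact mixture μ σ p y hσ hp0 hp1
end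

section
/- Suppose Y|U=u ~ N(μ + ϑ_p u, τ_p² σ u) and U ~ Exp(σ). Then the conditional distribution of U given Y=y is GIG(1/2, δ, γ), where δ = |y-μ|/(τ_p√σ) and γ = τ_p/(2√σ). -/
open Real MeasureTheory

noncomputable def besselK (ν u : ℝ) : ℝ :=
  ∫ t in Set.Ioi (0:ℝ), Real.exp (-u * Real.cosh t) * Real.cosh (ν * t)

noncomputable def gigPdf (ν a b u : ℝ) : ℝ :=
  ((b / a) ^ ν / (2 * besselK ν (a * b))) * u ^ (ν - 1) *
    Real.exp (-(a ^ 2 / u + b ^ 2 * u) / 2)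

noncomputable def normalPdf (m v y : ℝ) : ℝ :=
  (Real.sqrt (2 * π * v))⁻¹ * Real.exp (-(y - m) ^ 2 / (2 * v))

noncomputable def gigK (a b v : ℝ) : ℝ :=
  (Real.sqrt v)⁻¹ * Real.exp (-(a ^ 2 / v + b ^ 2 * v) / 2)

noncomputable def gigK2 (a b v : ℝ) : ℝ :=
  a / (b * (v * Real.sqrt v)) * Real.exp (-(a ^ 2 / v + b ^ 2 * v) / 2)

section GigInt
variable {a b : ℝ}

lemma gig_inv_img (ha : 0 < a) (hb : 0 < b) :
    (fun v => a ^ 2 / b ^ 2 * v⁻¹) '' Set.Ioi (0:ℝ) = Set.Ioi (0:ℝ) := by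
  ext s
  constructor
  · rintro ⟨v, hv, rfl⟩
    have hv' : (0:ℝ) < v := hv
    exact Set.mem_Ioi.2 (by positivity)
  · intro hs
    have hs' : (0:ℝ) < s := hs
    refine ⟨a ^ 2 / b ^ 2 / s, Set.mem_Ioi.2 (by positivity), ?_⟩
    field_simp

lemma gig_inv_deriv (ha : 0 < a) (hb : 0 < b) :
    ∀ v ∈ Set.Ioi (0:ℝ), HasDerivWithinAt (fun v => a ^ 2 / b ^ 2 * v⁻¹)
      (a ^ 2 / b ^ 2 * (-((v ^ 2)⁻¹))) (Set.Ioi 0) v := by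
  intro v hv
  have hv' : (0:ℝ) < v := hv
  exact ((hasDerivAt_inv hv'.ne').const_mul (a ^ 2 / b ^ 2)).hasDerivWithinAt

lemma gig_inv_inj (ha : 0 < a) (hb : 0 < b) :
    Set.InjOn (fun v => a ^ 2 / b ^ 2 * v⁻¹) (Set.Ioi (0:ℝ)) := by
  intro v1 _ v2 _ h
  have hc : (a ^ 2 / b ^ 2 : ℝ) ≠ 0 := by positivity
  exact inv_injective (mul_left_cancel₀ hc h)

lemma gig_inv_pointwise (ha : 0 < a) (hb : 0 < b) {v : ℝ} (hv : 0 < v) :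
    |a ^ 2 / b ^ 2 * (-((v ^ 2)⁻¹))| • gigK a b (a ^ 2 / b ^ 2 * v⁻¹) = gigK2 a b v := by
  have ha0 : a ≠ 0 := ha.ne'
  have hb0 : b ≠ 0 := hb.ne'
  obtain ⟨w, hw, rfl⟩ : ∃ w : ℝ, 0 < w ∧ w * w = v :=
    ⟨Real.sqrt v, Real.sqrt_pos.2 hv, Real.mul_self_sqrt hv.le⟩
  have hw0 : w ≠ 0 := hw.ne'
  have hws : Real.sqrt (w * w) = w := Real.sqrt_mul_self hw.le
  have harg : -(a ^ 2 / (a ^ 2 / b ^ 2 * (w * w)⁻¹) + b ^ 2 * (a ^ 2 / b ^ 2 * (w * w)⁻¹)) / 2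
      = -(a ^ 2 / (w * w) + b ^ 2 * (w * w)) / 2 := by
    field_simp
    ring
  have hsq : Real.sqrt (a ^ 2 / b ^ 2 * (w * w)⁻¹) = a / b * w⁻¹ := by
    rw [show a ^ 2 / b ^ 2 = (a / b) ^ 2 by ring, Real.sqrt_mul (by positivity),
      Real.sqrt_inv, hws, Real.sqrt_sq (by positivity)]
  unfold gigK gigK2
  rw [harg, hsq, hws, smul_eq_mul, mul_neg, abs_neg, abs_of_nonneg (by positivity)]
  field_simp

lemma gigK_integrable (ha : 0 < a) (hb : 0 < b) :
    IntegrableOn (gigK a b) (Set.Ioi (0:ℝ)) := by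
  have hdom : IntegrableOn (fun v => a⁻¹ * Real.exp (-(b ^ 2 / 2) * v)) (Set.Ioi (0:ℝ)) :=
    (exp_neg_integrableOn_Ioi 0 (by positivity)).const_mul a⁻¹
  refine hdom.mono' ?_ ?_
  · refine ContinuousOn.aestronglyMeasurable ?_ measurableSet_Ioi
    refine ContinuousOn.mul ?_ ?_
    · exact (Real.continuous_sqrt.continuousOn).inv₀
        fun v hv => (Real.sqrt_pos.2 hv).ne'
    · refine Real.continuous_exp.comp_continuousOn ?_
      refine ContinuousOn.div_const (ContinuousOn.neg (ContinuousOn.add ?_ ?_)) 2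
      · exact continuousOn_const.div continuousOn_id fun v hv => ne_of_gt hv
      · exact (continuous_const.mul continuous_id).continuousOn
  · rw [ae_restrict_iff' measurableSet_Ioi]
    refine Filter.Eventually.of_forall fun v hv => ?_
    have hv' : (0:ℝ) < v := hv
    have hsv : (0:ℝ) < Real.sqrt v := Real.sqrt_pos.2 hv'
    have hk : ‖gigK a b v‖ = gigK a b v := by
      rw [Real.norm_eq_abs, abs_of_nonneg]
      unfold gigK; positivity
    rw [hk]
    unfold gigK
    have hsplit : Real.exp (-(a ^ 2 / v + b ^ 2 * v) / 2)
        = Real.exp (-(a ^ 2 / v) / 2) * Real.exp (-(b ^ 2 / 2) * v) := by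
      rw [← Real.exp_add]; ring_nf
    have h1 : a ^ 2 / v ≤ Real.exp (a ^ 2 / v) := by
      linarith [Real.add_one_le_exp (a ^ 2 / v)]
    have h2 : a / Real.sqrt v ≤ Real.exp (a ^ 2 / v / 2) := by
      have hav : a / Real.sqrt v = Real.sqrt (a ^ 2 / v) := by
        rw [Real.sqrt_div (by positivity), Real.sqrt_sq ha.le]
      rw [hav]
      calc Real.sqrt (a ^ 2 / v) ≤ Real.sqrt (Real.exp (a ^ 2 / v)) := Real.sqrt_le_sqrt h1
        _ = Real.exp (a ^ 2 / v / 2) := (Real.exp_half _).symm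
    have h3 : a ≤ Real.sqrt v * Real.exp (a ^ 2 / v / 2) := by
      have := (div_le_iff₀ hsv).1 h2
      linarith
    have hkey : (Real.sqrt v)⁻¹ * Real.exp (-(a ^ 2 / v) / 2) ≤ a⁻¹ := by
      have hne : -(a ^ 2 / v) / 2 = -(a ^ 2 / v / 2) := by ring
      rw [hne, Real.exp_neg, ← mul_inv]
      exact inv_anti₀ ha h3
    rw [hsplit, ← mul_assoc]
    calc (Real.sqrt v)⁻¹ * Real.exp (-(a ^ 2 / v) / 2) * Real.exp (-(b ^ 2 / 2) * v)
        ≤ a⁻¹ * Real.exp (-(b ^ 2 / 2) * v) :=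
          mul_le_mul_of_nonneg_right hkey (Real.exp_pos _).le
      _ = a⁻¹ * Real.exp (-(b ^ 2 / 2) * v) := rfl

lemma gigK2_integrable (ha : 0 < a) (hb : 0 < b) :
    IntegrableOn (gigK2 a b) (Set.Ioi (0:ℝ)) := by
  have h := (integrableOn_image_iff_integrableOn_abs_deriv_smul measurableSet_Ioi
    (gig_inv_deriv ha hb) (gig_inv_inj ha hb) (gigK a b)).1
  rw [gig_inv_img ha hb] at h
  have h2 := h (gigK_integrable ha hb)
  exact h2.congr_fun (fun v hv => gig_inv_pointwise ha hb hv) measurableSet_Ioi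

lemma gigJ_eq (ha : 0 < a) (hb : 0 < b) :
    ∫ v in Set.Ioi (0:ℝ), gigK2 a b v = ∫ v in Set.Ioi (0:ℝ), gigK a b v := by
  have key := integral_image_eq_integral_abs_deriv_smul measurableSet_Ioi
    (gig_inv_deriv ha hb) (gig_inv_inj ha hb) (gigK a b)
  rw [gig_inv_img ha hb] at key
  rw [key]
  exact setIntegral_congr_fun measurableSet_Ioi fun v hv => (gig_inv_pointwise ha hb hv).symm

end GigInt

section GigMain
variable {a b : ℝ}

lemma g3_deriv (ha : 0 < a) (hb : 0 < b) :
    ∀ v ∈ Set.Ioi (0:ℝ), HasDerivWithinAt (fun v => b * Real.sqrt v - a * (Real.sqrt v)⁻¹)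
      (b * (1 / (2 * Real.sqrt v)) - a * (-(1 / (2 * Real.sqrt v)) / Real.sqrt v ^ 2))
      (Set.Ioi 0) v := by
  intro v hv
  have hv' : (0:ℝ) < v := hv
  have hsv : (0:ℝ) < Real.sqrt v := Real.sqrt_pos.2 hv'
  have h1 : HasDerivAt (fun v : ℝ => b * Real.sqrt v) (b * (1 / (2 * Real.sqrt v))) v :=
    (Real.hasDerivAt_sqrt hv'.ne').const_mul b
  have h2 : HasDerivAt (fun v : ℝ => a * (Real.sqrt v)⁻¹)
      (a * (-(1 / (2 * Real.sqrt v)) / Real.sqrt v ^ 2)) v :=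
    ((Real.hasDerivAt_sqrt hv'.ne').inv hsv.ne').const_mul a
  exact (h1.sub h2).hasDerivWithinAt

lemma g3_img (ha : 0 < a) (hb : 0 < b) :
    (fun v => b * Real.sqrt v - a * (Real.sqrt v)⁻¹) '' Set.Ioi (0:ℝ) = Set.univ := by
  refine Set.eq_univ_of_forall fun s => ?_
  have hst : (0:ℝ) ≤ s ^ 2 + 4 * (a * b) := by positivity
  set t := Real.sqrt (s ^ 2 + 4 * (a * b)) with htdef
  have ht2 : t ^ 2 = s ^ 2 + 4 * (a * b) := Real.sq_sqrt hst
  have htpos : |s| < t := by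
    rw [← Real.sqrt_sq_eq_abs]
    exact Real.sqrt_lt_sqrt (by positivity) (by nlinarith)
  have hr : (0:ℝ) < (s + t) / (2 * b) := by
    have : -s < t := lt_of_le_of_lt (neg_le_abs s) htpos
    have h2b : (0:ℝ) < 2 * b := by linarith
    apply div_pos <;> linarith
  set r := (s + t) / (2 * b) with hrdef
  refine ⟨r ^ 2, Set.mem_Ioi.2 (by positivity), ?_⟩
  show b * Real.sqrt (r ^ 2) - a * (Real.sqrt (r ^ 2))⁻¹ = s
  rw [Real.sqrt_sq hr.le]
  have hb0 : (b:ℝ) ≠ 0 := hb.ne'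
  have hr0 : r ≠ 0 := hr.ne'
  have hbr : b * r ^ 2 - s * r - a = 0 := by
    have : r = (s + t) / (2 * b) := hrdef
    have h2br : 2 * b * r = s + t := by rw [hrdef]; field_simp
    have h4 : 4 * b * (b * r ^ 2 - s * r - a) = 0 := by
      linear_combination (2 * b * r + s + t - 2 * s) * h2br + ht2
    rcases mul_eq_zero.1 h4 with h | h
    · exact absurd h (by positivity)
    · exact h
  field_simp
  nlinarith [hbr]

lemma g3_inj (ha : 0 < a) (hb : 0 < b) :
    Set.InjOn (fun v => b * Real.sqrt v - a * (Real.sqrt v)⁻¹) (Set.Ioi (0:ℝ)) := by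
  have hmono : StrictMonoOn (fun v => b * Real.sqrt v - a * (Real.sqrt v)⁻¹) (Set.Ioi (0:ℝ)) := by
    intro v1 h1 v2 h2 h12
    have hv1 : (0:ℝ) < v1 := h1
    have hs1 : (0:ℝ) < Real.sqrt v1 := Real.sqrt_pos.2 hv1
    have hs2 : (0:ℝ) < Real.sqrt v2 := Real.sqrt_pos.2 (lt_trans hv1 h12)
    have hss : Real.sqrt v1 < Real.sqrt v2 := Real.sqrt_lt_sqrt hv1.le h12
    have ha1 : a * (Real.sqrt v2)⁻¹ < a * (Real.sqrt v1)⁻¹ := by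
      apply mul_lt_mul_of_pos_left _ ha
      exact inv_strictAnti₀ hs1 hss
    have hb1 : b * Real.sqrt v1 < b * Real.sqrt v2 := by
      exact mul_lt_mul_of_pos_left hss hb
    simp only
    linarith
  exact hmono.injOn

lemma g3_pointwise (ha : 0 < a) (hb : 0 < b) {v : ℝ} (hv : 0 < v) :
    |b * (1 / (2 * Real.sqrt v)) - a * (-(1 / (2 * Real.sqrt v)) / Real.sqrt v ^ 2)| •
        Real.exp (-(1/2) * (b * Real.sqrt v - a * (Real.sqrt v)⁻¹) ^ 2)
      = Real.exp (a * b) * (b / 2) * (gigK a b v + gigK2 a b v) := by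
  have ha0 : a ≠ 0 := ha.ne'
  have hb0 : b ≠ 0 := hb.ne'
  obtain ⟨w, hw, rfl⟩ : ∃ w : ℝ, 0 < w ∧ w * w = v :=
    ⟨Real.sqrt v, Real.sqrt_pos.2 hv, Real.mul_self_sqrt hv.le⟩
  have hw0 : w ≠ 0 := hw.ne'
  have hws : Real.sqrt (w * w) = w := Real.sqrt_mul_self hw.le
  unfold gigK gigK2
  rw [hws, smul_eq_mul]
  have habs : |b * (1 / (2 * w)) - a * (-(1 / (2 * w)) / w ^ 2)|
      = b * (1 / (2 * w)) + a * ((1 / (2 * w)) / w ^ 2) := by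
    rw [abs_of_pos]
    · ring
    · have : (0:ℝ) < a * ((1 / (2 * w)) / w ^ 2) := by positivity
      have h2 : (0:ℝ) < b * (1 / (2 * w)) := by positivity
      have h3 : a * (-(1 / (2 * w)) / w ^ 2) = -(a * ((1 / (2 * w)) / w ^ 2)) := by ring
      linarith
  rw [habs]
  have hexp : Real.exp (-(1/2) * (b * w - a * w⁻¹) ^ 2)
      = Real.exp (a * b) * Real.exp (-(a ^ 2 / (w * w) + b ^ 2 * (w * w)) / 2) := by
    rw [← Real.exp_add]
    congr 1
    field_simp
    ring
  rw [hexp]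
  field_simp

lemma gig_integral (ha : 0 < a) (hb : 0 < b) :
    ∫ v in Set.Ioi (0:ℝ), gigK a b v = Real.sqrt (2 * π) / b * Real.exp (-(a * b)) := by
  have key := integral_image_eq_integral_abs_deriv_smul measurableSet_Ioi
    (g3_deriv ha hb) (g3_inj ha hb) (fun s => Real.exp (-(1/2) * s ^ 2))
  rw [g3_img ha hb, setIntegral_univ] at key
  have hL : ∫ s : ℝ, Real.exp (-(1/2) * s ^ 2) = Real.sqrt (2 * π) := by
    have := integral_gaussian (1/2)
    rw [show (π / (1/2) : ℝ) = 2 * π by ring] at this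
    simpa [mul_comm] using this
  have hR : ∫ v in Set.Ioi (0:ℝ),
      |b * (1 / (2 * Real.sqrt v)) - a * (-(1 / (2 * Real.sqrt v)) / Real.sqrt v ^ 2)| •
        Real.exp (-(1/2) * (b * Real.sqrt v - a * (Real.sqrt v)⁻¹) ^ 2)
      = Real.exp (a * b) * b * ∫ v in Set.Ioi (0:ℝ), gigK a b v := by
    rw [show (∫ v in Set.Ioi (0:ℝ),
        |b * (1 / (2 * Real.sqrt v)) - a * (-(1 / (2 * Real.sqrt v)) / Real.sqrt v ^ 2)| •
          Real.exp (-(1/2) * (b * Real.sqrt v - a * (Real.sqrt v)⁻¹) ^ 2))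
        = ∫ v in Set.Ioi (0:ℝ), Real.exp (a * b) * (b / 2) * (gigK a b v + gigK2 a b v) from
      setIntegral_congr_fun measurableSet_Ioi fun v hv => g3_pointwise ha hb hv]
    rw [MeasureTheory.integral_const_mul,
      integral_add (gigK_integrable ha hb) (gigK2_integrable ha hb), gigJ_eq ha hb]
    ring
  rw [hL, hR] at key
  have hexp : Real.exp (a * b) ≠ 0 := Real.exp_ne_zero _
  rw [Real.exp_neg]
  field_simp at key ⊢
  linarith [key]

end GigMain

lemma besselK_half {x : ℝ} (hx : 0 < x) :
    besselK (1/2) x = Real.sqrt (π / (2 * x)) * Real.exp (-x) := by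
  have h2x : (0:ℝ) < 2 * x := by linarith
  have hs : (0:ℝ) < Real.sqrt (2 * x) := Real.sqrt_pos.2 h2x
  set g : ℝ → ℝ := fun t => Real.sqrt (2 * x) * Real.sinh (t / 2) with hg
  set g' : ℝ → ℝ := fun t => Real.sqrt (2 * x) * (Real.cosh (t / 2) * (1 / 2)) with hg'
  have himg : g '' Set.Ioi (0:ℝ) = Set.Ioi (0:ℝ) := by
    ext s
    constructor
    · rintro ⟨t, ht, rfl⟩
      have h1 : 0 < Real.sinh (t / 2) :=
        Real.sinh_pos_iff.2 (by linarith [Set.mem_Ioi.1 ht])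
      exact Set.mem_Ioi.2 (mul_pos hs h1)
    · intro hsmem
      refine ⟨2 * Real.arsinh (s / Real.sqrt (2 * x)), ?_, ?_⟩
      · have h1 : 0 < s / Real.sqrt (2 * x) := div_pos (Set.mem_Ioi.1 hsmem) hs
        have := Real.arsinh_pos_iff.2 h1
        exact Set.mem_Ioi.2 (by linarith)
      · show Real.sqrt (2 * x) * Real.sinh (2 * Real.arsinh (s / Real.sqrt (2 * x)) / 2) = s
        rw [mul_div_cancel_left₀ _ (two_ne_zero), Real.sinh_arsinh]
        field_simp
  have hderiv : ∀ t ∈ Set.Ioi (0:ℝ), HasDerivWithinAt g (g' t) (Set.Ioi 0) t := by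
    intro t _
    exact (((Real.hasDerivAt_sinh (t / 2)).comp t
      ((hasDerivAt_id t).div_const 2)).const_mul (Real.sqrt (2 * x))).hasDerivWithinAt
  have hinj : Set.InjOn g (Set.Ioi (0:ℝ)) := by
    intro t1 _ t2 _ h
    have h1 := mul_left_cancel₀ hs.ne' h
    have h2 := Real.sinh_injective h1
    linarith [h2]
  have key := integral_image_eq_integral_abs_deriv_smul measurableSet_Ioi hderiv hinj
    (fun s => Real.exp (-s ^ 2))
  rw [himg] at key
  have hL : ∫ s in Set.Ioi (0:ℝ), Real.exp (-s ^ 2) = Real.sqrt π / 2 := by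
    have := integral_gaussian_Ioi 1
    simpa using this
  have hR : ∫ t in Set.Ioi (0:ℝ), |g' t| • Real.exp (-(g t) ^ 2)
      = (Real.sqrt (2 * x) / 2 * Real.exp x) * besselK (1/2) x := by
    rw [besselK, ← MeasureTheory.integral_const_mul]
    refine setIntegral_congr_fun measurableSet_Ioi (fun t _ => ?_)
    have hch : (0:ℝ) < Real.cosh (t / 2) := Real.cosh_pos _
    have habs : |g' t| = Real.sqrt (2 * x) * (Real.cosh (t / 2) * (1 / 2)) := by
      rw [hg']
      exact abs_of_pos (by positivity)
    have hcosh : Real.cosh t = 2 * Real.sinh (t / 2) ^ 2 + 1 := by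
      rw [show t = 2 * (t / 2) by ring, Real.cosh_two_mul, Real.cosh_sq]
      ring
    have hsq : (g t) ^ 2 = 2 * x * Real.sinh (t / 2) ^ 2 := by
      rw [hg]; rw [mul_pow, Real.sq_sqrt h2x.le]
    have hexp : Real.exp (-(g t) ^ 2) = Real.exp (-x * Real.cosh t) * Real.exp x := by
      rw [← Real.exp_add, hsq, hcosh]; ring_nf
    show |g' t| • Real.exp (-(g t) ^ 2)
      = Real.sqrt (2 * x) / 2 * Real.exp x * (Real.exp (-x * Real.cosh t) * Real.cosh (1/2 * t))
    rw [smul_eq_mul, habs, hexp, show (1:ℝ)/2 * t = t / 2 by ring]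
    ring
  rw [hL, hR] at key
  have hsqrt : Real.sqrt (π / (2 * x)) = Real.sqrt π / Real.sqrt (2 * x) :=
    Real.sqrt_div pi_pos.le _
  rw [hsqrt]
  have hexp : Real.exp x ≠ 0 := Real.exp_ne_zero x
  field_simp at key ⊢
  rw [Real.exp_neg]
  field_simp
  linarith [key]

lemma gigK_def (a b v : ℝ) : gigK a b v = (Real.sqrt v)⁻¹ * Real.exp (-(a ^ 2 / v + b ^ 2 * v) / 2) := rfl

/-- Under `Y|U=u ~ N(μ + ϑ_p u, τ_p² σ u)` and `U ~ Exp(σ)`, the conditional density of `U`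
given `Y = y` is the `GIG(1/2, δ, γ)` density with `δ = |y-μ|/(τ_p√σ)`, `γ = τ_p/(2√σ)`. -/
theorem cond_dist_U_given_Y (μ σ p y : ℝ) (hσ : 0 < σ) (hp : p ∈ Set.Ioo (0:ℝ) 1)
    (hy : y ≠ μ) :
    ∀ u : ℝ, 0 < u →
      (normalPdf (μ + (1 - 2 * p) / (p * (1 - p)) * u) ((2 / (p * (1 - p))) * σ * u) y *
          ((1 / σ) * Real.exp (-u / σ))) /
        (∫ v in Set.Ioi (0:ℝ),
          normalPdf (μ + (1 - 2 * p) / (p * (1 - p)) * v) ((2 / (p * (1 - p))) * σ * v) y *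
            ((1 / σ) * Real.exp (-v / σ))) =
      gigPdf (1/2) (|y - μ| / (Real.sqrt (2 / (p * (1 - p))) * Real.sqrt σ))
        (Real.sqrt (2 / (p * (1 - p))) / (2 * Real.sqrt σ)) u := by
  intro u hu
  obtain ⟨hp0, hp1⟩ := hp
  have hq : (0:ℝ) < p * (1 - p) := by nlinarith
  have hT : (0:ℝ) < 2 / (p * (1 - p)) := by positivity
  have hym : (0:ℝ) < |y - μ| := abs_pos.2 (sub_ne_zero.2 hy)
  set T : ℝ := 2 / (p * (1 - p)) with hTdef
  set a : ℝ := |y - μ| / (Real.sqrt T * Real.sqrt σ) with hadef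
  set b : ℝ := Real.sqrt T / (2 * Real.sqrt σ) with hbdef
  have hsT : (0:ℝ) < Real.sqrt T := Real.sqrt_pos.2 hT
  have hsσ : (0:ℝ) < Real.sqrt σ := Real.sqrt_pos.2 hσ
  have ha : (0:ℝ) < a := by rw [hadef]; positivity
  have hb : (0:ℝ) < b := by rw [hbdef]; positivity
  have ha2 : a ^ 2 = (y - μ) ^ 2 / (T * σ) := by
    rw [hadef, div_pow, mul_pow, Real.sq_sqrt hT.le, Real.sq_sqrt hσ.le, sq_abs]
  have hb2 : b ^ 2 = T / (4 * σ) := by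
    rw [hbdef, div_pow, mul_pow, Real.sq_sqrt hT.le, Real.sq_sqrt hσ.le]
    norm_num
  set ϑ : ℝ := (1 - 2 * p) / (p * (1 - p)) with hϑdef
  set C : ℝ := (Real.sqrt (2 * π * (T * σ)))⁻¹ * (1 / σ) * Real.exp (ϑ * (y - μ) / (T * σ))
    with hCdef
  have hC : C ≠ 0 := by
    rw [hCdef]
    have : (0:ℝ) < Real.sqrt (2 * π * (T * σ)) := Real.sqrt_pos.2 (by positivity)
    positivity
  -- pointwise identity
  have hpoint : ∀ v : ℝ, v ∈ Set.Ioi (0:ℝ) →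
      normalPdf (μ + ϑ * v) (T * σ * v) y * ((1 / σ) * Real.exp (-v / σ))
        = C * gigK a b v := by
    intro v hv
    have hv' : (0:ℝ) < v := hv
    have hsv : (0:ℝ) < Real.sqrt v := Real.sqrt_pos.2 hv'
    have hsplit : Real.sqrt (2 * π * (T * σ * v))
        = Real.sqrt (2 * π * (T * σ)) * Real.sqrt v := by
      rw [show 2 * π * (T * σ * v) = 2 * π * (T * σ) * v by ring,
        Real.sqrt_mul (by positivity)]
    have hexp : Real.exp (-(y - (μ + ϑ * v)) ^ 2 / (2 * (T * σ * v))) * Real.exp (-v / σ)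
        = Real.exp (ϑ * (y - μ) / (T * σ)) * Real.exp (-(a ^ 2 / v + b ^ 2 * v) / 2) := by
      rw [← Real.exp_add, ← Real.exp_add]
      congr 1
      rw [ha2, hb2, hTdef, hϑdef]
      have h1 : p ≠ 0 := hp0.ne'
      have h2 : (1 - p) ≠ 0 := by linarith
      have h3 : σ ≠ 0 := hσ.ne'
      have h4 : v ≠ 0 := hv'.ne'
      field_simp
      ring
    rw [normalPdf, gigK_def, hCdef]
    calc (Real.sqrt (2 * π * (T * σ * v)))⁻¹ *
          Real.exp (-(y - (μ + ϑ * v)) ^ 2 / (2 * (T * σ * v))) *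
          ((1 / σ) * Real.exp (-v / σ))
        = (Real.sqrt (2 * π * (T * σ)))⁻¹ * (Real.sqrt v)⁻¹ * (1 / σ) *
          (Real.exp (-(y - (μ + ϑ * v)) ^ 2 / (2 * (T * σ * v))) * Real.exp (-v / σ)) := by
          rw [hsplit, mul_inv]; ring
      _ = (Real.sqrt (2 * π * (T * σ)))⁻¹ * (Real.sqrt v)⁻¹ * (1 / σ) *
          (Real.exp (ϑ * (y - μ) / (T * σ)) * Real.exp (-(a ^ 2 / v + b ^ 2 * v) / 2)) := by
          rw [hexp]
      _ = (Real.sqrt (2 * π * (T * σ)))⁻¹ * (1 / σ) * Real.exp (ϑ * (y - μ) / (T * σ)) *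
          ((Real.sqrt v)⁻¹ * Real.exp (-(a ^ 2 / v + b ^ 2 * v) / 2)) := by ring
  -- denominator
  have hD : (∫ v in Set.Ioi (0:ℝ),
      normalPdf (μ + ϑ * v) (T * σ * v) y * ((1 / σ) * Real.exp (-v / σ)))
      = C * (Real.sqrt (2 * π) / b * Real.exp (-(a * b))) := by
    rw [setIntegral_congr_fun measurableSet_Ioi hpoint, MeasureTheory.integral_const_mul,
      gig_integral ha hb]
  rw [hpoint u hu, hD, mul_div_mul_left _ _ hC]
  -- final algebra
  have hab : (0:ℝ) < a * b := mul_pos ha hb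
  have hsqrtkey : Real.sqrt (π / (2 * (a * b)))
      = Real.sqrt (b / a) * Real.sqrt (2 * π) / (2 * b) := by
    have h1 : Real.sqrt (b / a) * Real.sqrt (2 * π) = Real.sqrt (b / a * (2 * π)) :=
      (Real.sqrt_mul (by positivity) _).symm
    have h2 : Real.sqrt (b / a * (2 * π)) = 2 * b * Real.sqrt (π / (2 * (a * b))) := by
      rw [show (2 * b : ℝ) = Real.sqrt ((2 * b) ^ 2) from (Real.sqrt_sq (by positivity)).symm,
        ← Real.sqrt_mul (by positivity)]
      congr 1
      field_simp
    rw [h1, h2]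
    field_simp
  rw [gigPdf, besselK_half hab, gigK_def]
  rw [show ((1:ℝ)/2 - 1) = -(1/2) by norm_num, Real.rpow_neg hu.le, ← Real.sqrt_eq_rpow,
    ← Real.sqrt_eq_rpow, hsqrtkey]
  have hsba : (0:ℝ) < Real.sqrt (b / a) := Real.sqrt_pos.2 (by positivity)
  have hs2π : (0:ℝ) < Real.sqrt (2 * π) := Real.sqrt_pos.2 (by positivity)
  have he : Real.exp (-(a * b)) ≠ 0 := Real.exp_ne_zero _
  field_simp
end
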